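/- Suppose k/e is odd. Then for every (a,b) ∈ GF(p^m)², the Hamming weight of the codeword c_{(a,b)} satisfies WT(c_{(a,b)}) = p^m − p^{m−1} − T(a,b)/(2p). -/

import Mathlib

/-- The fixed primitive `p`-th root of unity `ζ_p = exp(2πi/p)` raised to the power
`t ∈ GF(p)`, i.e. `ζ_p^t = exp(2πi·t/p)`. -/
noncomputable def zetaPow (p : ℕ) (t : ZMod p) : ℂ :=
  Complex.exp (2 * Real.pi * Complex.I * (t.val : ℂ) / p)

/-- The exponential sum
`T(a,b) = Σ_{y ∈ GF(p)^*} Σ_{x ∈ GF(p^m)} ( ζ_p^{Tr(y·a·x² + y·b·x^{p^k+1})}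
  + ζ_p^{Tr(-y·a·λ·x² - y·b·λ·x^{p^k+1})} )`,
where `Tr = Tr_{p^m/p}`. -/
noncomputable def Tab (p k : ℕ) [NeZero p] {F : Type*} [Field F] [Fintype F]
    [Algebra (ZMod p) F] (lam a b : F) : ℂ :=
  ∑ y ∈ Finset.univ \ {(0 : ZMod p)}, ∑ x : F,
    (zetaPow p (Algebra.trace (ZMod p) F
        (algebraMap (ZMod p) F y * a * x ^ 2 + algebraMap (ZMod p) F y * b * x ^ (p ^ k + 1))) +
     zetaPow p (Algebra.trace (ZMod p) F
        (-(algebraMap (ZMod p) F y * a * lam * x ^ 2)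
          - algebraMap (ZMod p) F y * b * lam * x ^ (p ^ k + 1))))

/-- The Hamming weight of the codeword
`c_{(a,b)} = ( Tr_{p^m/p}( a·(-π)^t + b·π^{t(p^k+1)/2} ) )_{t=0}^{p^m-2}`. -/
noncomputable def wtC (p m k : ℕ) [NeZero p] {F : Type*} [Field F] [Fintype F]
    [Algebra (ZMod p) F] (π a b : F) : ℕ :=
  Nat.card {t : Fin (p ^ m - 1) //
    Algebra.trace (ZMod p) F
      (a * (-π) ^ (t : ℕ) + b * π ^ ((t : ℕ) * ((p ^ k + 1) / 2))) ≠ 0}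


/-!
Let `N = p^m - 1`, `q - 1 = p^e - 1 = 2n` and `d = (p^k + 1)/2`. Counting the zeros of the codeword
with the additive characters of `GF(p)` expresses `p · WT(c_{(a,b)})` through the sums
`S(y) = Σ_{t<N} G_y(t)`, `G_y(t) = ζ_p^{Tr(y a (-π)^t + y b π^{td})}`, so it suffices to show that
the inner sum of `T(a,b)` equals `2 + 2 S(y)`.

Since `λ` is a nonsquare of `GF(q)`, Euler's criterion gives `λ^n = -1`. The quotients
`(p^m - 1)/(q - 1)` and `(p^k - 1)/(q - 1)` are odd because `s` and `k/e` are; hence `λ = π^j`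
with `j` odd, and `λ^d = λ (λ^n)^{(p^k-1)/(q-1)} = -λ`. Substituting `x = π^u`, the first half of
the inner sum of `T(a,b)` becomes `1 + Σ_{u<N} G_y(2u)`, and the twist by `-λ = (-π)^j`, together
with `λ^d = -λ`, turns the second half into `1 + Σ_{u<N} G_y(2u + j)`. As `G_y` has period `N`, the
shift `j` may be replaced by `1`, and then the two halves run twice over a period.
-/

open Finset

section Sums

variable {M : Type*} [AddCancelCommMonoid M]

theorem Finset.sum_range_two_mul (G : ℕ → M) (n : ℕ) :
    ∑ t ∈ range (2 * n), G t = ∑ u ∈ range n, (G (2 * u) + G (2 * u + 1)) := by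
  induction n with
  | zero => simp
  | succ n ih =>
    rw [show 2 * (n + 1) = 2 * n + 1 + 1 by ring, sum_range_succ, sum_range_succ, ih,
      sum_range_succ, add_assoc]

theorem Function.Periodic.sum_range_add {H : ℕ → M} {N : ℕ} (hH : Function.Periodic H N)
    (w : ℕ) : ∑ u ∈ range N, H (u + w) = ∑ u ∈ range N, H u := by
  induction w with
  | zero => rfl
  | succ w ih =>
    have hK := (sum_range_succ' (fun u => H (u + w)) N).symm.trans
      (sum_range_succ (fun u => H (u + w)) N)
    rw [zero_add, add_comm N w, hH w] at hK
    simpa only [add_right_comm _ 1 w, add_assoc, ih] using add_right_cancel hK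

theorem Function.Periodic.sum_range_two_mul {G : ℕ → M} {N : ℕ} (hG : Function.Periodic G N) :
    ∑ t ∈ range (2 * N), G t = 2 • ∑ t ∈ range N, G t := by
  rw [two_mul, Finset.sum_range_add, two_nsmul]
  simp only [add_comm N]
  exact congrArg _ (sum_congr rfl fun x _ => hG x)

theorem IsPrimitiveRoot.sum_eq_add_sum_range_pow {F : Type*} [Field F] [Fintype F] {π : F}
    {N : ℕ} (hπ : IsPrimitiveRoot π N) (hcard : Fintype.card F = N + 1) (f : F → M) :
    ∑ x, f x = f 0 + ∑ u ∈ range N, f (π ^ u) := by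
  classical
  have hN : N ≠ 0 := by
    have := Fintype.one_lt_card (α := F)
    omega
  have : NeZero N := ⟨hN⟩
  rw [← add_sum_erase univ f (mem_univ 0)]
  congr 1
  refine (sum_nbij (π ^ ·) (fun u _ => ?_) hπ.injOn_pow (fun x hx => ?_) fun _ _ => rfl).symm
  · simpa using pow_ne_zero u (hπ.ne_zero hN)
  · have hx0 : x ≠ 0 := (mem_erase.1 hx).1
    obtain ⟨i, hi, rfl⟩ := hπ.eq_pow_of_pow_eq_one
      (by simpa [hcard] using FiniteField.pow_card_sub_one_eq_one x hx0)
    exact ⟨i, by simpa using hi, rfl⟩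

theorem IsPrimitiveRoot.sum_pair_eq_two_nsmul_sum_range {F : Type*} [Field F] [Fintype F]
    {π : F} {N : ℕ} (hπ : IsPrimitiveRoot π N) (hcard : Fintype.card F = N + 1) (hN : Even N)
    (f : F → M) (A B lam : F) {d j : ℕ} (hd0 : d ≠ 0) (hj : Odd j) (hlam : π ^ j = lam)
    (hd : lam ^ d = -lam) :
    ∑ x, (f (A * x ^ 2 + B * x ^ (2 * d)) + f (-(A * lam * x ^ 2) - B * lam * x ^ (2 * d)))
      = 2 • (f 0 + ∑ t ∈ range N, f (A * (-π) ^ t + B * π ^ (t * d))) := by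
  set G : ℕ → M := fun t => f (A * (-π) ^ t + B * π ^ (t * d))
  have hGper : Function.Periodic G N := fun t => by
    simp only [G, pow_add, hN.neg_pow, hπ.pow_eq_one, mul_one, add_mul, pow_mul π N d, one_pow]
  have h_sq : ∀ u, f (A * (π ^ u) ^ 2 + B * (π ^ u) ^ (2 * d)) = G (2 * u) := fun u => by
    simp only [G, (even_two_mul u).neg_pow, ← pow_mul, mul_comm u, mul_right_comm 2 d u]
  have h_lam_sq : ∀ u, f (-(A * lam * (π ^ u) ^ 2) - B * lam * (π ^ u) ^ (2 * d))
      = G (2 * u + j) := fun u => by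
    simp only [G, ((even_two_mul u).add_odd hj).neg_pow, pow_add, add_mul, pow_mul π j d, hlam,
      hd, ← pow_mul, mul_comm u, mul_right_comm 2 d u]
    congr 1
    ring
  obtain ⟨w, rfl⟩ := hj
  have h_shift : ∑ u ∈ range N, G (2 * u + (2 * w + 1)) = ∑ u ∈ range N, G (2 * u + 1) := by
    have hper : Function.Periodic (fun u => G (2 * u + 1)) N := fun u => by
      dsimp only
      rw [show 2 * (u + N) + 1 = 2 * u + 1 + N + N by ring, hGper, hGper]
    rw [← hper.sum_range_add w]
    exact sum_congr rfl fun u _ => congrArg G (by ring)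
  have h0 : ∀ c : F, c * 0 ^ 2 = 0 ∧ c * 0 ^ (2 * d) = 0 := fun c => by simp [hd0]
  rw [sum_add_distrib, hπ.sum_eq_add_sum_range_pow hcard, hπ.sum_eq_add_sum_range_pow hcard]
  simp only [h_sq, h_lam_sq, h_shift, h0, add_zero, neg_zero, sub_zero]
  rw [smul_add, ← hGper.sum_range_two_mul, Finset.sum_range_two_mul, sum_add_distrib, two_nsmul]
  abel

end Sums

theorem AddChar.card_mul_card_filter_ne_zero {R ι : Type*} [CommRing R] [Fintype R]
    [DecidableEq R] [Fintype ι] {ψ : AddChar R ℂ} (hψ : ψ.IsPrimitive) (g : ι → R) :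
    (Fintype.card R : ℂ) * #{i | g i ≠ 0}
      = (Fintype.card R - 1) * Fintype.card ι - ∑ y ∈ univ \ {0}, ∑ i, ψ (y * g i) := by
  have h_all : ∑ y, ∑ i, ψ (y * g i) = Fintype.card R * #{i | g i = 0} := by
    rw [sum_comm]
    simp only [AddChar.sum_mulShift _ hψ, Nat.cast_ite, Nat.cast_zero]
    rw [← sum_filter, sum_const, nsmul_eq_mul, mul_comm]
  have h_zero : ∑ i, ψ (0 * g i) = Fintype.card ι := by simp
  have h_split := sum_eq_sum_sdiff_singleton_add (mem_univ (0 : R)) fun y => ∑ i, ψ (y * g i)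
  have h_card : (#{i | g i = 0} : ℂ) + #{i | g i ≠ 0} = Fintype.card ι := by
    exact_mod_cast card_filter_add_card_filter_not (p := fun i => g i = 0) (s := univ)
  rw [h_all, h_zero] at h_split
  linear_combination (Fintype.card R : ℂ) * h_card - h_split

theorem zetaPow_eq_stdAddChar (p : ℕ) [NeZero p] (t : ZMod p) :
    zetaPow p t = ZMod.stdAddChar t := by
  rw [ZMod.stdAddChar_apply, ZMod.toCircle_apply, zetaPow]

theorem Nat.exists_odd_mul_eq_pow_sub_one {c n : ℕ} (hc : Odd c) (hn : Odd n) :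
    ∃ M, Odd M ∧ c ^ n - 1 = (c - 1) * M := by
  refine ⟨∑ i ∈ range n, c ^ i, ?_, ?_⟩
  · rwa [odd_sum_iff_odd_card_odd, filter_true_of_mem fun i _ => hc.pow, card_range]
  · rw [mul_comm, geom_sum_mul_of_one_le hc.pos]

theorem IsPrimitiveRoot.pow_eq_neg_one {F : Type*} [Field F] {ζ : F} {n : ℕ}
    (hζ : IsPrimitiveRoot ζ (2 * n)) (hn : 0 < n) : ζ ^ n = -1 :=
  (hζ.pow (by positivity) (mul_comm 2 n)).eq_neg_one_of_two_right

theorem IsPrimitiveRoot.pow_eq_neg_one_of_not_exists_sq {F : Type*} [Field F] {ω lam : F}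
    {n : ℕ} (hω : IsPrimitiveRoot ω (2 * n)) (hn : 0 < n) (hlam : lam ^ (2 * n) = 1)
    (hns : ¬ ∃ x : F, x ^ (2 * n + 1) = x ∧ x ^ 2 = lam) : lam ^ n = -1 := by
  have : NeZero (2 * n) := ⟨by positivity⟩
  obtain ⟨i, -, rfl⟩ := hω.eq_pow_of_pow_eq_one hlam
  obtain ⟨i, rfl⟩ | hi := i.even_or_odd
  · refine absurd ⟨ω ^ i, ?_, ?_⟩ hns
    · rw [pow_succ, ← pow_mul, mul_comm i, pow_mul, hω.pow_eq_one, one_pow, one_mul]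
    · rw [← pow_mul, mul_two]
  · rw [← pow_mul, mul_comm, pow_mul, hω.pow_eq_neg_one hn, hi.neg_one_pow]

theorem IsPrimitiveRoot.exists_odd_pow_eq {F : Type*} [Field F] {π lam : F} {n M : ℕ}
    (hπ : IsPrimitiveRoot π (2 * n * M)) (hn : 0 < n) (hM : Odd M) (hlam : lam ^ n = -1) :
    ∃ j, Odd j ∧ π ^ j = lam := by
  rw [mul_assoc] at hπ
  have hnM : 0 < n * M := mul_pos hn hM.pos
  have : NeZero (2 * (n * M)) := ⟨by positivity⟩
  obtain ⟨j, -, hj⟩ := hπ.eq_pow_of_pow_eq_one (ξ := lam)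
    (by rw [mul_left_comm, pow_mul, hlam, (even_two_mul M).neg_one_pow])
  have hhalf : π ^ (n * M) = -1 := hπ.pow_eq_neg_one hnM
  have hne : (-1 : F) ≠ 1 := hhalf ▸ hπ.pow_ne_one_of_pos_of_lt hnM.ne' (by omega)
  refine ⟨j, (neg_one_pow_eq_neg_one_iff_odd hne).1 ?_, hj⟩
  calc (-1 : F) ^ j = lam ^ (n * M) := by rw [← hj, ← pow_mul, mul_comm, pow_mul, hhalf]
    _ = -1 := by rw [pow_mul, hlam, hM.neg_one_pow]

noncomputable def codewordCharSum (p N d : ℕ) {F : Type*} [Field F] [Algebra (ZMod p) F]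
    (π a b : F) (y : ZMod p) : ℂ :=
  ∑ t ∈ range N, zetaPow p (Algebra.trace (ZMod p) F
    (algebraMap (ZMod p) F y * a * (-π) ^ t + algebraMap (ZMod p) F y * b * π ^ (t * d)))

theorem natCast_mul_wtC (p m k : ℕ) [NeZero p] {F : Type*} [Field F] [Fintype F]
    [Algebra (ZMod p) F] (π a b : F) :
    (p : ℂ) * wtC p m k π a b = (p - 1) * (p ^ m - 1 : ℕ)
      - ∑ y ∈ univ \ {0}, codewordCharSum p (p ^ m - 1) ((p ^ k + 1) / 2) π a b y := by
  classical
  have h_count := AddChar.card_mul_card_filter_ne_zero (ZMod.isPrimitive_stdAddChar p)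
    fun t : Fin (p ^ m - 1) =>
      Algebra.trace (ZMod p) F (a * (-π) ^ (t : ℕ) + b * π ^ ((t : ℕ) * ((p ^ k + 1) / 2)))
  rw [ZMod.card, Fintype.card_fin] at h_count
  rw [wtC, Nat.card_eq_fintype_card, Fintype.card_subtype, h_count]
  congr 1
  refine sum_congr rfl fun y _ => ?_
  rw [codewordCharSum, ← Fin.sum_univ_eq_sum_range]
  refine sum_congr rfl fun t _ => ?_
  rw [zetaPow_eq_stdAddChar, ← smul_eq_mul, ← map_smul, Algebra.smul_def, mul_add, mul_assoc,
    mul_assoc]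

theorem Tab_eq_of_pow_odd_eq (p k : ℕ) [NeZero p] (hodd : Odd p) {F : Type*} [Field F]
    [Fintype F] [Algebra (ZMod p) F] {N : ℕ} (hcard : Fintype.card F = N + 1) (hN : Even N)
    {π lam : F} (hπ : IsPrimitiveRoot π N) {j : ℕ} (hj : Odd j) (hlam : π ^ j = lam)
    (hd : lam ^ ((p ^ k + 1) / 2) = -lam) (a b : F) :
    Tab p k lam a b = 2 * (p - 1)
      + 2 * ∑ y ∈ univ \ {0}, codewordCharSum p N ((p ^ k + 1) / 2) π a b y := by
  have h2d : p ^ k + 1 = 2 * ((p ^ k + 1) / 2) :=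
    (Nat.two_mul_div_two_of_even hodd.pow.add_one).symm
  have hd0 : (p ^ k + 1) / 2 ≠ 0 := by omega
  set d := (p ^ k + 1) / 2
  have hf0 : zetaPow p (Algebra.trace (ZMod p) F 0) = 1 := by
    rw [map_zero, zetaPow_eq_stdAddChar, AddChar.map_zero_eq_one]
  unfold Tab
  rw [h2d]
  refine (sum_congr rfl fun y _ => hπ.sum_pair_eq_two_nsmul_sum_range hcard hN
    (fun c => zetaPow p (Algebra.trace (ZMod p) F c)) _ _ lam hd0 hj hlam hd).trans ?_
  simp only [hf0, smul_add, sum_add_distrib, sum_const, card_univ_sdiff, ZMod.card,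
    card_singleton, nsmul_eq_mul, Nat.cast_sub hodd.pos, ← mul_sum, codewordCharSum]
  push_cast
  ring

theorem wtC_eq_of_pow_odd_eq (p m k : ℕ) [NeZero p] (hodd : Odd p) {F : Type*} [Field F]
    [Fintype F] [Algebra (ZMod p) F] (hF : Fintype.card F = p ^ m) {π lam : F}
    (hπ : IsPrimitiveRoot π (p ^ m - 1)) {j : ℕ} (hj : Odd j) (hlam : π ^ j = lam)
    (hd : lam ^ ((p ^ k + 1) / 2) = -lam) (a b : F) :
    (wtC p m k π a b : ℂ) = (p : ℂ) ^ m - (p : ℂ) ^ (m - 1) - Tab p k lam a b / (2 * p) := by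
  have hm : m ≠ 0 := by
    rintro rfl
    exact Fintype.one_lt_card.ne' (by simpa using hF)
  have hpm1 : 1 ≤ p ^ m := Nat.one_le_pow _ _ hodd.pos
  have hp0 : (p : ℂ) ≠ 0 := by exact_mod_cast hodd.pos.ne'
  have hpm : (p : ℂ) ^ m = p * p ^ (m - 1) := by rw [← pow_succ', Nat.sub_add_cancel (by omega)]
  have h_wt := natCast_mul_wtC p m k π a b
  rw [Nat.cast_sub hpm1, Nat.cast_pow, Nat.cast_one] at h_wt
  rw [eq_div_of_mul_eq hp0 ((mul_comm _ _).trans h_wt),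
    Tab_eq_of_pow_odd_eq p k hodd (by omega) (Nat.Odd.sub_odd hodd.pow odd_one) hπ hj hlam hd,
    hpm]
  field_simp
  ring

theorem stmt_15_general (p m k e s : ℕ) [Fact p.Prime] (hodd : Odd p)
    (hm : 0 < m)
    (he : e = Nat.gcd m k) (hs : s = m / e) (hsodd : Odd s)
    (hke : Odd (k / e))
    (F : Type*) [Field F] [Fintype F] [Algebra (ZMod p) F]
    (hF : Fintype.card F = p ^ m)
    (π : F) (hπ : orderOf π = p ^ m - 1)
    (lam : F) (hlam0 : lam ≠ 0) (hlamq : lam ^ (p ^ e) = lam)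
    (hlamns : ¬ ∃ x : F, x ^ (p ^ e) = x ∧ x ^ 2 = lam)
    (a b : F) :
    (wtC p m k π a b : ℂ)
      = (p : ℂ) ^ m - (p : ℂ) ^ (m - 1) - Tab p k lam a b / (2 * p) := by
  obtain ⟨M, hM, hpm⟩ := Nat.exists_odd_mul_eq_pow_sub_one (hodd.pow (n := e)) hsodd
  obtain ⟨Mk, hMk, hpk⟩ := Nat.exists_odd_mul_eq_pow_sub_one (hodd.pow (n := e)) hke
  rw [← pow_mul, hs, Nat.mul_div_cancel' (he ▸ Nat.gcd_dvd_left m k)] at hpm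
  rw [← pow_mul, Nat.mul_div_cancel' (he ▸ Nat.gcd_dvd_right m k)] at hpk
  obtain ⟨n, hn⟩ : ∃ n, p ^ e = 2 * n + 1 := hodd.pow
  rw [hn, Nat.add_sub_cancel] at hpm hpk
  rw [hn] at hlamq hlamns
  have hπ' : IsPrimitiveRoot π (2 * n * M) := hpm ▸ hπ ▸ IsPrimitiveRoot.orderOf π
  have hN0 : 0 < 2 * n * M :=
    hpm ▸ Nat.sub_pos_of_lt (Nat.one_lt_pow hm.ne' (Fact.out : p.Prime).one_lt)
  have hn0 : 0 < n := Nat.pos_of_ne_zero fun h => by simp [h] at hN0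
  have hlam_sq : lam ^ (2 * n) = 1 :=
    mul_left_cancel₀ hlam0 (by rw [← pow_succ', hlamq, mul_one])
  have hhalf : lam ^ n = -1 :=
    (hπ'.pow hN0 (mul_comm _ M)).pow_eq_neg_one_of_not_exists_sq hn0 hlam_sq hlamns
  obtain ⟨j, hj, hlam⟩ := hπ'.exists_odd_pow_eq hn0 hM hhalf
  have hd : lam ^ ((p ^ k + 1) / 2) = -lam := by
    have : 1 ≤ p ^ k := Nat.one_le_pow k p hodd.pos
    rw [mul_assoc] at hpk
    rw [show (p ^ k + 1) / 2 = n * Mk + 1 by omega, pow_succ, pow_mul, hhalf, hMk.neg_one_pow,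
      neg_one_mul]
  exact wtC_eq_of_pow_odd_eq p m k hodd hF (hπ ▸ IsPrimitiveRoot.orderOf π) hj hlam hd a b

/-- Let `p` be an odd prime, `m, k` positive, `e = gcd(m,k)`, `s = m/e`
odd with `s ≥ 3`, `π` a primitive element of `F = GF(p^m)`, and `λ` a fixed nonsquare in
`GF(q) ⊆ F` (the subfield of solutions of `x^{p^e} = x`).  Suppose `k/e` is odd.  Then
for every `(a,b) ∈ GF(p^m)²`,
`WT(c_{(a,b)}) = p^m - p^{m-1} - T(a,b)/(2p)`. -/
theorem stmt_15 (p m k e s : ℕ) [Fact p.Prime] (hodd : Odd p)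
    (hm : 0 < m) (hk : 0 < k)
    (he : e = Nat.gcd m k) (hs : s = m / e) (hsodd : Odd s) (hs3 : 3 ≤ s)
    (hke : Odd (k / e))
    (F : Type*) [Field F] [Fintype F] [Algebra (ZMod p) F]
    (hF : Fintype.card F = p ^ m)
    (π : F) (hπ : orderOf π = p ^ m - 1)
    (lam : F) (hlam0 : lam ≠ 0) (hlamq : lam ^ (p ^ e) = lam)
    (hlamns : ¬ ∃ x : F, x ^ (p ^ e) = x ∧ x ^ 2 = lam)
    (a b : F) :
    (wtC p m k π a b : ℂ)
      = (p : ℂ) ^ m - (p : ℂ) ^ (m - 1) - Tab p k lam a b / (2 * p) :=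
  stmt_15_general p m k e s hodd hm he hs hsodd hke F hF π hπ lam hlam0 hlamq hlamns a b
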